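/- arXiv:1706.09019 — 4 statements merged into one kernel-verified Lean document; each statement's English description precedes it below -/
import Mathlib

section
/- (Lemma 2(i).) For every Z ∈ ℂ^{n×k} and every V ∈ ℂ^{n×k}, it holds that Vᴴ A V ⪯ H_A(V, Z) in the Loewner order. -/
open Matrix ComplexOrder

/-- `H_A(V, Z) = Vᴴ A⁺ V + Zᴴ A⁻ V + Vᴴ A⁻ Z − Zᴴ A⁻ Z`, the convex majorant of
`Vᴴ A V` obtained by linearizing the concave part at `Z`. -/
noncomputable def Hmat {n k : ℕ} (Ap Am : Matrix (Fin n) (Fin n) ℂ)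
    (V Z : Matrix (Fin n) (Fin k) ℂ) : Matrix (Fin k) (Fin k) ℂ :=
  Vᴴ * Ap * V + Zᴴ * Am * V + Vᴴ * Am * Z - Zᴴ * Am * Z

theorem Hmat_sub_conjTranspose_mul_add_mul {n k : ℕ} (Ap Am : Matrix (Fin n) (Fin n) ℂ)
    (V Z : Matrix (Fin n) (Fin k) ℂ) :
    Hmat Ap Am V Z - Vᴴ * (Ap + Am) * V = (V - Z)ᴴ * (-Am) * (V - Z) := by
  simp only [Hmat, conjTranspose_sub, Matrix.sub_mul, Matrix.mul_sub, Matrix.mul_neg,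
    Matrix.neg_mul, Matrix.add_mul, Matrix.mul_add]
  abel

theorem stmt1_general {n k : ℕ} (A Ap Am : Matrix (Fin n) (Fin n) ℂ)
    (hAm : (-Am).PosSemidef)
    (hdec : A = Ap + Am) (Z V : Matrix (Fin n) (Fin k) ℂ) :
    (Hmat Ap Am V Z - Vᴴ * A * V).PosSemidef := by
  rw [hdec, Hmat_sub_conjTranspose_mul_add_mul]
  exact hAm.conjTranspose_mul_mul_same (V - Z)

/-- **Lemma 2(i).** For every `Z ∈ ℂ^{n×k}` and every `V ∈ ℂ^{n×k}`,
`Vᴴ A V ⪯ H_A(V, Z)` in the Loewner order, where `A = A⁺ + A⁻` is a fixed decomposition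
of the Hermitian matrix `A` into a positive semidefinite part `A⁺` and a negative
semidefinite part `A⁻`. -/
theorem stmt1 {n k : ℕ} (A Ap Am : Matrix (Fin n) (Fin n) ℂ)
    (hA : A.IsHermitian) (hAp : Ap.PosSemidef) (hAm : (-Am).PosSemidef)
    (hdec : A = Ap + Am) (Z V : Matrix (Fin n) (Fin k) ℂ) :
    (Hmat Ap Am V Z - Vᴴ * A * V).PosSemidef :=
  stmt1_general A Ap Am hAm hdec Z V
end

section
/- (Proposition 1, per-constraint form.) Let A ∈ ℂ^{n×n} be Hermitian with a fixed decomposition A = A⁺ + A⁻ (A⁺ ⪰ 0, A⁻ ⪯ 0), let V₀, V ∈ ℂ^{n×k}, b, x ∈ ℝ^p, c ∈ ℝ^k, and set C := (e₁cᵀ + ce₁ᵀ)/2. Suppose Λ ∈ ℝ^ℓ satisfies Λⱼ ≤ 0 for all j and H_A(V, V₀) − C + (bᵀx)·e₁e₁ᵀ − Σ_{j=1}^{ℓ} Λⱼ Wⱼ ⪯ 0 (with real matrices coerced to complex). Then for every ξ ∈ Ξ, the real number ξᵀ(VᴴAV)ξ satisfies ξᵀ(VᴴAV)ξ + bᵀx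 ≤ cᵀξ. -/
/-!
The linearization `H_A(V, V₀)` majorizes `Vᴴ A V` in the Loewner order, since their difference
is `(V - V₀)ᴴ (-A⁻) (V - V₀) ⪰ 0`. Testing the LMI against a real `ξ` with `ξ₁ = 1` turns
`C` into `cᵀξ` and `e₁e₁ᵀ` into `1`, so `ξᴴ (Vᴴ A V) ξ ≤ cᵀξ - bᵀx + ∑ⱼ Λⱼ ξᵀWⱼξ`, and every
term of the last sum is `≤ 0` on `Ξ`.
-/

open Matrix ComplexOrder

/-- The first standard basis vector `e₁ ∈ ℝ^k`. -/
def e1 (k : ℕ) [NeZero k] : Fin k → ℝ := Pi.single 0 1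

namespace Matrix

variable {m : Type*} [Fintype m]

theorem re_dotProduct_mulVec_le_of_posSemidef_sub {M N : Matrix m m ℂ}
    (h : (N - M).PosSemidef) (v : m → ℂ) :
    (star v ⬝ᵥ M *ᵥ v).re ≤ (star v ⬝ᵥ N *ᵥ v).re := by
  have := (Complex.nonneg_iff.mp (h.dotProduct_mulVec_nonneg v)).1
  rw [sub_mulVec, dotProduct_sub, Complex.sub_re] at this
  linarith

theorem ofReal_dotProduct_map_ofReal_mulVec (M : Matrix m m ℝ) (ξ : m → ℝ) :
    (fun i => (ξ i : ℂ)) ⬝ᵥ M.map Complex.ofReal *ᵥ (fun i => (ξ i : ℂ))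
      = ((ξ ⬝ᵥ M *ᵥ ξ : ℝ) : ℂ) := by
  simp [dotProduct, mulVec, Matrix.map_apply]

theorem dotProduct_vecMulVec_mulVec {R : Type*} [CommSemiring R] (a b ξ : m → R) :
    ξ ⬝ᵥ vecMulVec a b *ᵥ ξ = (ξ ⬝ᵥ a) * (b ⬝ᵥ ξ) := by
  rw [vecMulVec_mulVec, dotProduct_comm]
  simp [mul_comm, dotProduct_comm]

end Matrix

theorem e1_dotProduct {k : ℕ} [NeZero k] (ξ : Fin k → ℝ) : e1 k ⬝ᵥ ξ = ξ 0 := by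
  simp [e1, single_dotProduct]

theorem posSemidef_Hmat_sub {n k : ℕ} {Ap Am : Matrix (Fin n) (Fin n) ℂ}
    (hAm : (-Am).PosSemidef) (V Z : Matrix (Fin n) (Fin k) ℂ) :
    (Hmat Ap Am V Z - Vᴴ * (Ap + Am) * V).PosSemidef := by
  rw [Hmat_sub_conjTranspose_mul_add_mul]
  exact hAm.conjTranspose_mul_mul_same _

theorem dotProduct_mulVec_certificate {k ℓ : ℕ} [NeZero k]
    (W : Fin ℓ → Matrix (Fin k) (Fin k) ℝ) (c : Fin k → ℝ) (β : ℝ) (Λ : Fin ℓ → ℝ)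
    {ξ : Fin k → ℝ} (hξ : ξ 0 = 1) :
    ξ ⬝ᵥ ((1 / 2 : ℝ) • (vecMulVec (e1 k) c + vecMulVec c (e1 k))
        - β • vecMulVec (e1 k) (e1 k) + ∑ j, Λ j • W j) *ᵥ ξ
      = c ⬝ᵥ ξ - β + ∑ j, Λ j * (ξ ⬝ᵥ W j *ᵥ ξ) := by
  simp only [add_mulVec, sub_mulVec, smul_mulVec, sum_mulVec, dotProduct_add, dotProduct_sub,
    dotProduct_smul, dotProduct_sum, dotProduct_vecMulVec_mulVec, dotProduct_comm ξ (e1 k),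
    e1_dotProduct, hξ, dotProduct_comm ξ c, smul_eq_mul]
  ring

theorem stmt6_general {n k ℓ p : ℕ} [NeZero k]
    (W : Fin ℓ → Matrix (Fin k) (Fin k) ℝ)
    (A Ap Am : Matrix (Fin n) (Fin n) ℂ)
    (hAm : (-Am).PosSemidef) (hdec : A = Ap + Am)
    (V₀ V : Matrix (Fin n) (Fin k) ℂ)
    (b x : Fin p → ℝ) (c : Fin k → ℝ)
    (Λ : Fin ℓ → ℝ) (hΛ : ∀ j, Λ j ≤ 0)
    (hLMI : (-(Hmat Ap Am V V₀
        - (((1 / 2 : ℝ) • (vecMulVec (e1 k) c + vecMulVec c (e1 k))).map Complex.ofReal)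
        + (((b ⬝ᵥ x) • vecMulVec (e1 k) (e1 k)).map Complex.ofReal)
        - ∑ j, ((Λ j • W j).map Complex.ofReal))).PosSemidef) :
    ∀ ξ : Fin k → ℝ, ξ 0 = 1 → (∀ j, 0 ≤ ξ ⬝ᵥ (W j) *ᵥ ξ) →
      ((fun i => (ξ i : ℂ)) ⬝ᵥ (Vᴴ * A * V) *ᵥ (fun i => (ξ i : ℂ))).re + b ⬝ᵥ x
        ≤ c ⬝ᵥ ξ := by
  intro ξ hξ0 hξW
  subst hdec
  set N : Matrix (Fin k) (Fin k) ℝ := (1 / 2 : ℝ) • (vecMulVec (e1 k) c + vecMulVec c (e1 k))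
    - (b ⬝ᵥ x) • vecMulVec (e1 k) (e1 k) + ∑ j, Λ j • W j
  have hN : (N.map Complex.ofReal - Hmat Ap Am V V₀).PosSemidef := by
    convert hLMI using 1
    ext i j
    simp [N, Matrix.sum_apply]
    ring
  have hξ : star (fun i => (ξ i : ℂ)) = fun i => (ξ i : ℂ) := by
    ext i; simp
  have hAH := re_dotProduct_mulVec_le_of_posSemidef_sub (posSemidef_Hmat_sub (Ap := Ap) hAm V V₀)
    (fun i => (ξ i : ℂ))
  have hHN := re_dotProduct_mulVec_le_of_posSemidef_sub hN (fun i => (ξ i : ℂ))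
  rw [hξ] at hAH hHN
  rw [ofReal_dotProduct_map_ofReal_mulVec, Complex.ofReal_re,
    dotProduct_mulVec_certificate W c _ Λ hξ0] at hHN
  have hΛξ : ∑ j, Λ j * (ξ ⬝ᵥ W j *ᵥ ξ) ≤ 0 :=
    Finset.sum_nonpos fun j _ => mul_nonpos_of_nonpos_of_nonneg (hΛ j) (hξW j)
  linarith

/-- **Proposition 1, per-constraint form.** Let `A ∈ ℂ^{n×n}` be Hermitian
with a fixed decomposition `A = A⁺ + A⁻` (`A⁺ ⪰ 0`, `A⁻ ⪯ 0`), let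
`V₀, V ∈ ℂ^{n×k}`, `b, x ∈ ℝ^p`, `c ∈ ℝ^k`, and set `C := (e₁cᵀ + ce₁ᵀ)/2`.  Suppose
`Λ ∈ ℝ^ℓ` satisfies `Λⱼ ≤ 0` for all `j` and
`H_A(V, V₀) − C + (bᵀx)·e₁e₁ᵀ − Σⱼ Λⱼ Wⱼ ⪯ 0` (real matrices coerced to complex).
Then for every `ξ ∈ Ξ = {ξ : ξ₁ = 1, ξᵀWⱼξ ≥ 0 ∀j}`, the real number `ξᵀ(VᴴAV)ξ`
satisfies `ξᵀ(VᴴAV)ξ + bᵀx ≤ cᵀξ`. -/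
theorem stmt6 {n k ℓ p : ℕ} [NeZero k]
    (W : Fin ℓ → Matrix (Fin k) (Fin k) ℝ) (hW : ∀ j, (W j).IsSymm)
    (A Ap Am : Matrix (Fin n) (Fin n) ℂ) (hA : A.IsHermitian)
    (hAp : Ap.PosSemidef) (hAm : (-Am).PosSemidef) (hdec : A = Ap + Am)
    (V₀ V : Matrix (Fin n) (Fin k) ℂ)
    (b x : Fin p → ℝ) (c : Fin k → ℝ)
    (Λ : Fin ℓ → ℝ) (hΛ : ∀ j, Λ j ≤ 0)
    (hLMI : (-(Hmat Ap Am V V₀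
        - (((1 / 2 : ℝ) • (vecMulVec (e1 k) c + vecMulVec c (e1 k))).map Complex.ofReal)
        + (((b ⬝ᵥ x) • vecMulVec (e1 k) (e1 k)).map Complex.ofReal)
        - ∑ j, ((Λ j • W j).map Complex.ofReal))).PosSemidef) :
    ∀ ξ : Fin k → ℝ, ξ 0 = 1 → (∀ j, 0 ≤ ξ ⬝ᵥ (W j) *ᵥ ξ) →
      ((fun i => (ξ i : ℂ)) ⬝ᵥ (Vᴴ * A * V) *ᵥ (fun i => (ξ i : ℂ))).re + b ⬝ᵥ x
        ≤ c ⬝ᵥ ξ :=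
  stmt6_general W A Ap Am hAm hdec V₀ V b x c Λ hΛ hLMI
end

section
/- (Key step in the proof of Proposition 2, combining Cases 1 and 2.) Let C ∈ ℝ^{k×k} be symmetric and ρ, γ ∈ ℝ. If the (k+1)×(k+1) real symmetric block matrix with blocks [C, (ρ/2)e₁; (ρ/2)e₁ᵀ, −γ] is positive semidefinite, then (ρ + γ)·e₁e₁ᵀ − C ⪯ 0, i.e., (ρ + γ)·e₁e₁ᵀ ⪯ C in the Loewner order. -/
/-!
Congruence by the `(k+1) × k` matrix `[I; -e₁ᵀ]` preserves positive semidefiniteness. Evaluated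
on the block matrix it tests it on the vectors `(x, -x₁)`: the off-diagonal blocks contribute
`-ρ x₁²` and the corner `-γ x₁²`, leaving `C - (ρ + γ) e₁e₁ᵀ`.
-/

open Matrix

namespace Matrix

variable {m n R : Type*} [Fintype m] [Fintype n] [DecidableEq m]
  [Ring R] [PartialOrder R] [StarRing R]

theorem PosSemidef.fromBlocks_compress {A : Matrix m m R} {B : Matrix m n R}
    {C : Matrix n m R} {D : Matrix n n R} (h : (fromBlocks A B C D).PosSemidef)
    (X : Matrix n m R) : (A + B * X + Xᴴ * C + Xᴴ * D * X).PosSemidef := by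
  convert h.conjTranspose_mul_mul_same (fromRows 1 X) using 1
  rw [conjTranspose_fromRows_eq_fromCols_conjTranspose, fromCols_mul_fromBlocks,
    fromCols_mul_fromRows]
  simp only [conjTranspose_one, Matrix.one_mul, Matrix.mul_one, Matrix.add_mul, Matrix.mul_assoc]
  abel

end Matrix

theorem stmt9_general {k : ℕ} [NeZero k] (C : Matrix (Fin k) (Fin k) ℝ)
    (ρ γ : ℝ)
    (hblock : (Matrix.fromBlocks C
        (Matrix.of fun (i : Fin k) (_ : Fin 1) => (ρ / 2) * e1 k i)
        (Matrix.of fun (_ : Fin 1) (j : Fin k) => (ρ / 2) * e1 k j)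
        (Matrix.of fun (_ : Fin 1) (_ : Fin 1) => -γ)).PosSemidef) :
    (C - (ρ + γ) • vecMulVec (e1 k) (e1 k)).PosSemidef := by
  convert hblock.fromBlocks_compress (-replicateRow (Fin 1) (e1 k)) using 1
  ext i j
  simp [mul_apply, vecMulVec_apply]
  ring

/-- **key step in the proof of Proposition 2, combining Cases 1 and 2.**
Let `C ∈ ℝ^{k×k}` be symmetric and `ρ, γ ∈ ℝ`.  If the `(k+1)×(k+1)` real symmetric
block matrix `[C, (ρ/2)e₁; (ρ/2)e₁ᵀ, −γ]` is positive semidefinite, then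
`(ρ + γ)·e₁e₁ᵀ − C ⪯ 0`, i.e. `(ρ + γ)·e₁e₁ᵀ ⪯ C` in the Loewner order. -/
theorem stmt9 {k : ℕ} [NeZero k] (C : Matrix (Fin k) (Fin k) ℝ) (hC : C.IsSymm)
    (ρ γ : ℝ)
    (hblock : (Matrix.fromBlocks C
        (Matrix.of fun (i : Fin k) (_ : Fin 1) => (ρ / 2) * e1 k i)
        (Matrix.of fun (_ : Fin 1) (j : Fin k) => (ρ / 2) * e1 k j)
        (Matrix.of fun (_ : Fin 1) (_ : Fin 1) => -γ)).PosSemidef) :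
    (C - (ρ + γ) • vecMulVec (e1 k) (e1 k)).PosSemidef :=
  stmt9_general C ρ γ hblock
end

section
/- (Dual-feasibility lemma in the proof of Proposition 2.) Let A ∈ ℂ^{n×n} be Hermitian, v₀ ∈ ℂⁿ, b, x₀ ∈ ℝ^p, C ∈ ℝ^{k×k} symmetric, and W₁, …, W_ℓ ∈ ℝ^{k×k} symmetric. Suppose there exist ρ, γ ∈ ℝ and λ ∈ ℝ^ℓ with λⱼ ≤ 0 for all j such that: (a) the (k+1)×(k+1) real symmetric block matrix with blocks [C + Σ_{j=1}^{ℓ} λⱼWⱼ, (ρ/2)e₁; (ρ/2)e₁ᵀ, −γ] is positive semidefinite, and (b) the real number v₀ᴴAv₀ satisfies v₀ᴴAv₀ + bᵀx₀ ≤ ρ + γ. Then (v₀ᴴAv₀ + bᵀx₀)·e₁e₁ᵀ − C − Σ_{j=1}^{ℓ} λⱼ Wⱼ ⪯ 0. -/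
/-!
Write `M = C + ∑ⱼ λⱼ Wⱼ`. Compressing the positive semidefinite block matrix by `[I; -e₁ᵀ]`
gives `M - (ρ + γ) e₁e₁ᵀ ⪰ 0`; since `v₀ᴴAv₀ + bᵀx₀ ≤ ρ + γ` and `e₁e₁ᵀ ⪰ 0`, also
`M - (v₀ᴴAv₀ + bᵀx₀) e₁e₁ᵀ ⪰ 0`.
-/

open Matrix

namespace Matrix

variable {m n R : Type*}

theorem PosSemidef.fromBlocks_conj_fromRows_one [Fintype m] [Fintype n] [DecidableEq m] [Ring R]
    [PartialOrder R] [StarRing R] {A : Matrix m m R} {B : Matrix m n R} {C : Matrix n m R}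
    {D : Matrix n n R} (h : (fromBlocks A B C D).PosSemidef) (X : Matrix n m R) :
    (A + B * X + Xᴴ * C + Xᴴ * D * X).PosSemidef := by
  have := h.conjTranspose_mul_mul_same (fromRows 1 X)
  rw [conjTranspose_fromRows_eq_fromCols_conjTranspose, fromCols_mul_fromBlocks,
    fromCols_mul_fromRows] at this
  convert this using 1
  simp only [conjTranspose_one, Matrix.one_mul, Matrix.mul_one, Matrix.add_mul, Matrix.mul_assoc]
  abel

theorem PosSemidef.sub_smul_of_le [CommRing R] [PartialOrder R] [StarRing R] [StarOrderedRing R]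
    {M P : Matrix m m R} {s t : R} (h : (M - s • P).PosSemidef) (hP : P.PosSemidef)
    (hts : t ≤ s) : (M - t • P).PosSemidef := by
  convert h.add (hP.smul (sub_nonneg.2 hts)) using 1
  module

theorem PosSemidef.sub_smul_vecMulVec_of_fromBlocks [Fintype m] [DecidableEq m]
    {M : Matrix m m ℝ} {u : m → ℝ} {c d : ℝ}
    (h : (fromBlocks M (of fun i (_ : Fin 1) => c * u i) (of fun (_ : Fin 1) j => c * u j)
      (of fun _ _ => d)).PosSemidef) :
    (M - (2 * c - d) • vecMulVec u u).PosSemidef := by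
  convert h.fromBlocks_conj_fromRows_one (-of fun (_ : Fin 1) j => u j) using 1
  ext i j
  simp [vecMulVec_apply, mul_apply]
  ring

end Matrix

theorem stmt12_general {n k ℓ p : ℕ} [NeZero k]
    (A : Matrix (Fin n) (Fin n) ℂ)
    (v₀ : Fin n → ℂ) (b x₀ : Fin p → ℝ)
    (C : Matrix (Fin k) (Fin k) ℝ)
    (W : Fin ℓ → Matrix (Fin k) (Fin k) ℝ)
    (ρ γ : ℝ) (lam : Fin ℓ → ℝ)
    (hblock : (Matrix.fromBlocks (C + ∑ j, lam j • W j)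
        (Matrix.of fun (i : Fin k) (_ : Fin 1) => (ρ / 2) * e1 k i)
        (Matrix.of fun (_ : Fin 1) (j : Fin k) => (ρ / 2) * e1 k j)
        (Matrix.of fun (_ : Fin 1) (_ : Fin 1) => -γ)).PosSemidef)
    (hineq : (star v₀ ⬝ᵥ A *ᵥ v₀).re + b ⬝ᵥ x₀ ≤ ρ + γ) :
    (-(((star v₀ ⬝ᵥ A *ᵥ v₀).re + b ⬝ᵥ x₀) • vecMulVec (e1 k) (e1 k)
        - C - ∑ j, lam j • W j)).PosSemidef := by
  have hfeas := hblock.sub_smul_vecMulVec_of_fromBlocks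
  rw [show 2 * (ρ / 2) - -γ = ρ + γ by ring] at hfeas
  have hle := hfeas.sub_smul_of_le (posSemidef_vecMulVec_self_star (e1 k)) hineq
  rwa [neg_sub, sub_sub_eq_add_sub, add_comm (∑ j, lam j • W j)]

/-- **dual-feasibility lemma in the proof of Proposition 2.** Let
`A ∈ ℂ^{n×n}` be Hermitian, `v₀ ∈ ℂⁿ`, `b, x₀ ∈ ℝ^p`, `C ∈ ℝ^{k×k}` symmetric, and
`W₁, …, W_ℓ ∈ ℝ^{k×k}` symmetric.  Suppose there exist `ρ, γ ∈ ℝ` and `λ ∈ ℝ^ℓ` with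
`λⱼ ≤ 0` for all `j` such that (a) the `(k+1)×(k+1)` real symmetric block matrix
`[C + Σⱼ λⱼWⱼ, (ρ/2)e₁; (ρ/2)e₁ᵀ, −γ]` is positive semidefinite, and (b) the real
number `v₀ᴴAv₀` satisfies `v₀ᴴAv₀ + bᵀx₀ ≤ ρ + γ`.  Then
`(v₀ᴴAv₀ + bᵀx₀)·e₁e₁ᵀ − C − Σⱼ λⱼ Wⱼ ⪯ 0`. -/
theorem stmt12 {n k ℓ p : ℕ} [NeZero k]
    (A : Matrix (Fin n) (Fin n) ℂ) (hA : A.IsHermitian)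
    (v₀ : Fin n → ℂ) (b x₀ : Fin p → ℝ)
    (C : Matrix (Fin k) (Fin k) ℝ) (hC : C.IsSymm)
    (W : Fin ℓ → Matrix (Fin k) (Fin k) ℝ) (hW : ∀ j, (W j).IsSymm)
    (ρ γ : ℝ) (lam : Fin ℓ → ℝ) (hlam : ∀ j, lam j ≤ 0)
    (hblock : (Matrix.fromBlocks (C + ∑ j, lam j • W j)
        (Matrix.of fun (i : Fin k) (_ : Fin 1) => (ρ / 2) * e1 k i)
        (Matrix.of fun (_ : Fin 1) (j : Fin k) => (ρ / 2) * e1 k j)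
        (Matrix.of fun (_ : Fin 1) (_ : Fin 1) => -γ)).PosSemidef)
    (hineq : (star v₀ ⬝ᵥ A *ᵥ v₀).re + b ⬝ᵥ x₀ ≤ ρ + γ) :
    (-(((star v₀ ⬝ᵥ A *ᵥ v₀).re + b ⬝ᵥ x₀) • vecMulVec (e1 k) (e1 k)
        - C - ∑ j, lam j • W j)).PosSemidef :=
  stmt12_general A v₀ b x₀ C W ρ γ lam hblock hineq
end
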